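/- arXiv:2203.10266 — 5 statements merged into one kernel-verified Lean document; each statement's English description precedes it below -/
import Mathlib

section
/- Let X, Y be real normed spaces, Z a closed subspace of Y, and T : X → Y a bounded linear operator. If there exists x₀ ∈ S_X with ‖Tx₀‖ = ‖T‖ and Tx₀ ⊥_B Z, then T ⊥_B L(X,Z), i.e., ‖T + λS‖ ≥ ‖T‖ for every bounded linear operator S : X → Z and every scalar λ. -/
theorem stmt_2
    {X Y : Type*} [NormedAddCommGroup X] [NormedSpace ℝ X]
    [NormedAddCommGroup Y] [NormedSpace ℝ Y]
    (Z : Subspace ℝ Y) (hZ : IsClosed (Z : Set Y))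
    (T : X →L[ℝ] Y) (x₀ : X) (hx₀ : ‖x₀‖ = 1) (hTx₀ : ‖T x₀‖ = ‖T‖)
    (horth : ∀ z ∈ Z, ∀ lam : ℝ, ‖T x₀ + lam • z‖ ≥ ‖T x₀‖) :
    ∀ S : X →L[ℝ] Y, (∀ x, S x ∈ Z) → ∀ lam : ℝ, ‖T + lam • S‖ ≥ ‖T‖ := by
  intro S hS lam
  calc ‖T‖ = ‖T x₀‖ := hTx₀.symm
    _ ≤ ‖T x₀ + lam • S x₀‖ := horth _ (hS x₀) lam
    _ = ‖(T + lam • S) x₀‖ := by simp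
    _ ≤ ‖T + lam • S‖ * ‖x₀‖ := (T + lam • S).le_opNorm x₀
    _ = ‖T + lam • S‖ := by rw [hx₀, mul_one]
end

section
/- Let X, Y be real normed spaces, Z a closed subspace of Y, and T : X → Y a bounded linear operator with T ⊥_B L(X,Z). If the supremum sup_{x ∈ S_X} d(Tx, Z) equals d(T, L(X,Z)) and is attained at some x₀ ∈ S_X, then ‖Tx₀‖ = ‖T‖ and Tx₀ ⊥_B Z. -/
theorem stmt_3
    {X Y : Type*} [NormedAddCommGroup X] [NormedSpace ℝ X]
    [NormedAddCommGroup Y] [NormedSpace ℝ Y]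
    (Z : Subspace ℝ Y) (hZ : IsClosed (Z : Set Y))
    (T : X →L[ℝ] Y)
    (horth : ∀ S : X →L[ℝ] Y, (∀ x, S x ∈ Z) → ∀ lam : ℝ, ‖T + lam • S‖ ≥ ‖T‖)
    (x₀ : X) (hx₀ : ‖x₀‖ = 1)
    (hsup : sSup {r : ℝ | ∃ x : X, ‖x‖ = 1 ∧ r = Metric.infDist (T x) (Z : Set Y)}
      = sInf {r : ℝ | ∃ S : X →L[ℝ] Y, (∀ x, S x ∈ Z) ∧ r = ‖T - S‖})
    (hatt : Metric.infDist (T x₀) (Z : Set Y)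
      = sSup {r : ℝ | ∃ x : X, ‖x‖ = 1 ∧ r = Metric.infDist (T x) (Z : Set Y)}) :
    ‖T x₀‖ = ‖T‖ ∧ ∀ z ∈ Z, ∀ lam : ℝ, ‖T x₀ + lam • z‖ ≥ ‖T x₀‖ := by
  -- The infimum set equals {‖T-S‖} and every element is ≥ ‖T‖, with ‖T‖ attained at S = 0.
  have hmem : ‖T‖ ∈ {r : ℝ | ∃ S : X →L[ℝ] Y, (∀ x, S x ∈ Z) ∧ r = ‖T - S‖} := by
    exact ⟨0, fun x => by simp, by simp⟩
  have hlb : ∀ r ∈ {r : ℝ | ∃ S : X →L[ℝ] Y, (∀ x, S x ∈ Z) ∧ r = ‖T - S‖}, ‖T‖ ≤ r := by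
    rintro r ⟨S, hS, rfl⟩
    have := horth S hS (-1)
    simpa [sub_eq_add_neg, neg_one_smul] using this
  have hinf : sInf {r : ℝ | ∃ S : X →L[ℝ] Y, (∀ x, S x ∈ Z) ∧ r = ‖T - S‖} = ‖T‖ :=
    le_antisymm (csInf_le ⟨‖T‖, hlb⟩ hmem) (le_csInf ⟨_, hmem⟩ hlb)
  have hd : Metric.infDist (T x₀) (Z : Set Y) = ‖T‖ := by
    rw [hatt, hsup, hinf]
  have hle : Metric.infDist (T x₀) (Z : Set Y) ≤ ‖T x₀‖ := by
    have := Metric.infDist_le_dist_of_mem (x := T x₀) (Z.zero_mem : (0 : Y) ∈ (Z : Set Y))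
    simpa using this
  have hTx : ‖T x₀‖ = ‖T‖ := by
    have h1 : ‖T x₀‖ ≤ ‖T‖ := by
      calc ‖T x₀‖ ≤ ‖T‖ * ‖x₀‖ := T.le_opNorm x₀
      _ = ‖T‖ := by rw [hx₀, mul_one]
    exact le_antisymm h1 (hd ▸ hle)
  have hd' : Metric.infDist (T x₀) (Z : Set Y) = ‖T x₀‖ := by rw [hd, hTx]
  refine ⟨hTx, fun z hz lam => ?_⟩
  have hmem' : -(lam • z) ∈ (Z : Set Y) := Z.neg_mem (Z.smul_mem lam hz)
  have := Metric.infDist_le_dist_of_mem (x := T x₀) hmem'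
  rw [hd'] at this
  simpa [dist_eq_norm, sub_neg_eq_add] using this
end

section
/- Let X, Y be real normed spaces and T : X → Y a nonzero bounded linear operator whose norm attainment set M_T = {x ∈ S_X : ‖Tx‖ = ‖T‖} equals {x₀, −x₀} for a single pair of antipodal points. Then x₀ is an extreme point of the closed unit ball B_X. -/
/-! The function `x ↦ ‖T x‖` is convex and bounded by `‖T‖` on the unit ball, so the set where it
attains `‖T‖` is a face of the ball. For `T ≠ 0` this face is `M_T = {x₀, -x₀}`, of which `x₀` is an
extreme point, and extreme points of a face are extreme points of the ball. -/

open Set Metric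

theorem ConvexOn.isExtreme_setOf_eq_of_le {𝕜 E β : Type*} [Semiring 𝕜] [PartialOrder 𝕜]
    [IsOrderedRing 𝕜] [AddCommMonoid E] [Module 𝕜 E] [AddCommMonoid β] [LinearOrder β]
    [IsOrderedCancelAddMonoid β] [Module 𝕜 β] [PosSMulStrictMono 𝕜 β]
    {A : Set E} {f : E → β} {M : β}
    (hf : ConvexOn 𝕜 A f) (hM : ∀ x ∈ A, f x ≤ M) : IsExtreme 𝕜 A {x ∈ A | f x = M} := by
  refine ⟨sep_subset _ _, fun x hx y hy z ⟨_, hzM⟩ hz ↦ ⟨hx, ?_⟩⟩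
  by_contra hxM
  have hfz : f z < f y := hf.lt_right_of_left_lt hx hy hz (hzM ▸ (hM x hx).lt_of_ne hxM)
  exact (hM y hy).not_gt (hzM ▸ hfz)

theorem left_mem_extremePoints_pair {𝕜 E : Type*} [Ring 𝕜] [LinearOrder 𝕜]
    [IsStrictOrderedRing 𝕜] [DenselyOrdered 𝕜] [AddCommGroup E] [Module 𝕜 E]
    [Module.IsTorsionFree 𝕜 E] {x y : E} (hxy : x ≠ y) :
    x ∈ ({x, y} : Set E).extremePoints 𝕜 := by
  refine ⟨mem_insert x {y}, ?_⟩
  rintro x₁ (rfl | rfl) x₂ (rfl | rfl) hx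
  · rfl
  · rfl
  · exact right_mem_openSegment_iff.1 hx
  · rw [openSegment_same] at hx
    exact (hxy hx).elim

namespace ContinuousLinearMap

variable {E F : Type*} [NormedAddCommGroup E] [NormedSpace ℝ E]
  [NormedAddCommGroup F] [NormedSpace ℝ F]

theorem isExtreme_closedBall_setOf_norm_apply_eq_opNorm (T : E →L[ℝ] F) :
    IsExtreme ℝ (closedBall (0 : E) 1) {x ∈ closedBall (0 : E) 1 | ‖T x‖ = ‖T‖} :=
  ((convexOn_norm convex_univ).comp_linearMap T.toLinearMap
    |>.subset (fun _ _ ↦ trivial) (convex_closedBall 0 1)).isExtreme_setOf_eq_of_le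
    fun x hx ↦ T.unit_le_opNorm x (mem_closedBall_zero_iff.1 hx)

theorem setOf_mem_closedBall_and_norm_apply_eq_opNorm {T : E →L[ℝ] F} (hT : T ≠ 0) :
    {x ∈ closedBall (0 : E) 1 | ‖T x‖ = ‖T‖} = {x | ‖x‖ = 1 ∧ ‖T x‖ = ‖T‖} := by
  ext x
  simp only [mem_ofPred_eq, mem_closedBall_zero_iff]
  refine ⟨fun ⟨hx, hTx⟩ ↦ ⟨le_antisymm hx ?_, hTx⟩, fun ⟨hx, hTx⟩ ↦ ⟨hx.le, hTx⟩⟩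
  have hTpos : 0 < ‖T‖ := (norm_nonneg T).lt_of_ne' (T.opNorm_zero_iff.not.2 hT)
  exact (le_mul_iff_one_le_right hTpos).1 (hTx ▸ T.le_opNorm x)

end ContinuousLinearMap

theorem stmt_4
    {X Y : Type*} [NormedAddCommGroup X] [NormedSpace ℝ X]
    [NormedAddCommGroup Y] [NormedSpace ℝ Y]
    (T : X →L[ℝ] Y) (hT : T ≠ 0) (x₀ : X)
    (hM : {x : X | ‖x‖ = 1 ∧ ‖T x‖ = ‖T‖} = {x₀, -x₀}) :
    x₀ ∈ Set.extremePoints ℝ (Metric.closedBall (0 : X) 1) := by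
  have hx₀ : x₀ ∈ {x : X | ‖x‖ = 1 ∧ ‖T x‖ = ‖T‖} := hM ▸ mem_insert x₀ {-x₀}
  have hx₀_ne : x₀ ≠ -x₀ :=
    have : IsAddTorsionFree X := .of_isTorsionFree ℝ X
    self_ne_neg.2 (norm_ne_zero_iff.1 (hx₀.1 ▸ one_ne_zero))
  have hface := T.isExtreme_closedBall_setOf_norm_apply_eq_opNorm
  rw [T.setOf_mem_closedBall_and_norm_apply_eq_opNorm hT, hM] at hface
  exact hface.extremePoints_subset_extremePoints (left_mem_extremePoints_pair hx₀_ne)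
end

section
/- Let X, Y be real Banach spaces, Z a closed subspace of Y, T : X → Y bounded linear, and suppose y* ∈ Z^⊥ ⊆ Y* with ‖y*‖ = 1, and x** ∈ X** with ‖x**‖ = 1 satisfies x**(T* y*) = ‖T‖. Then ‖T** x**‖ = ‖T**‖ and T** x** is Birkhoff-James orthogonal to Z^{⊥⊥} ⊆ Y**, i.e., ‖T**x** + u‖ ≥ ‖T**x**‖ for all u ∈ Z^{⊥⊥}. -/
/-!
Evaluating at `g`, which has norm one and vanishes on `Z`, gives
`‖T‖ = |(T** x** + u) g| ≤ ‖T** x** + u‖` for every `u ∈ Z^⊥⊥`, including `u = 0`.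
On the other hand `‖T** x**‖ ≤ ‖T**‖ ≤ ‖T‖` because `‖x**‖ = 1`, so `‖T** x**‖`, `‖T**‖`
and `‖T‖` all coincide.
-/

namespace ContinuousLinearMap

variable {𝕜 : Type*} [NontriviallyNormedField 𝕜]

theorem norm_apply_le_norm_add_mul_of_apply_eq_zero {E F : Type*}
    [SeminormedAddCommGroup E] [NormedSpace 𝕜 E] [SeminormedAddCommGroup F] [NormedSpace 𝕜 F]
    (A : E →L[𝕜] F) {u : E →L[𝕜] F} {x : E} (hu : u x = 0) :
    ‖A x‖ ≤ ‖A + u‖ * ‖x‖ := by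
  simpa [hu] using (A + u).le_opNorm x

variable {X Y : Type*} [NormedAddCommGroup X] [NormedSpace 𝕜 X]
  [NormedAddCommGroup Y] [NormedSpace 𝕜 Y]

def IsDoubleAdjoint (T : X →L[𝕜] Y)
    (T2 : StrongDual 𝕜 (StrongDual 𝕜 X) →L[𝕜] StrongDual 𝕜 (StrongDual 𝕜 Y)) : Prop :=
  ∀ (ξ : StrongDual 𝕜 (StrongDual 𝕜 X)) (g : StrongDual 𝕜 Y), T2 ξ g = ξ (g.comp T)

namespace IsDoubleAdjoint

variable {T : X →L[𝕜] Y}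
  {T2 : StrongDual 𝕜 (StrongDual 𝕜 X) →L[𝕜] StrongDual 𝕜 (StrongDual 𝕜 Y)}

theorem norm_apply_le (h : IsDoubleAdjoint T T2) (ξ : StrongDual 𝕜 (StrongDual 𝕜 X)) :
    ‖T2 ξ‖ ≤ ‖T‖ * ‖ξ‖ := by
  refine (T2 ξ).opNorm_le_bound (by positivity) fun g ↦ ?_
  calc ‖T2 ξ g‖ = ‖ξ (g.comp T)‖ := by rw [h]
    _ ≤ ‖ξ‖ * (‖g‖ * ‖T‖) := ξ.le_opNorm_of_le (g.opNorm_comp_le T)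
    _ = ‖T‖ * ‖ξ‖ * ‖g‖ := by ring

/- Instance search cannot match the instances of `StrongDual 𝕜 (StrongDual 𝕜 X)` as a space of
maps with those as a normed space (the unification times out), so the operator norm on maps
between biduals is supplied explicitly, here and in `le_opNorm` below. -/
theorem opNorm_le (h : IsDoubleAdjoint T T2) :
    @Norm.norm _ (@ContinuousLinearMap.hasOpNorm 𝕜 𝕜 (StrongDual 𝕜 (StrongDual 𝕜 X))
      (StrongDual 𝕜 (StrongDual 𝕜 Y)) _ _ _ _ _ _ (RingHom.id 𝕜)) T2 ≤ ‖T‖ := by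
  apply opNorm_le_bound _ (norm_nonneg T) h.norm_apply_le

end IsDoubleAdjoint

end ContinuousLinearMap

open ContinuousLinearMap in
theorem stmt_7_general
    {X Y : Type*} [NormedAddCommGroup X] [NormedSpace ℝ X]
    [NormedAddCommGroup Y] [NormedSpace ℝ Y]
    (Z : Subspace ℝ Y)
    (T : X →L[ℝ] Y)
    (T2 : StrongDual ℝ (StrongDual ℝ X) →L[ℝ] StrongDual ℝ (StrongDual ℝ Y))
    (hT2 : ∀ (ξ : StrongDual ℝ (StrongDual ℝ X)) (g : StrongDual ℝ Y), T2 ξ g = ξ (g.comp T))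
    (g : StrongDual ℝ Y) (hg : ‖g‖ = 1) (hgZ : ∀ z ∈ Z, g z = 0)
    (xss : StrongDual ℝ (StrongDual ℝ X)) (hxss : ‖xss‖ = 1)
    (hnorm : xss (g.comp T) = ‖T‖) :
    ‖T2 xss‖ = @Norm.norm _ (@ContinuousLinearMap.hasOpNorm ℝ ℝ (StrongDual ℝ (StrongDual ℝ X))
        (StrongDual ℝ (StrongDual ℝ Y)) _ _ _ _ _ _ (RingHom.id ℝ)) T2 ∧
      ∀ u : StrongDual ℝ (StrongDual ℝ Y),
        (∀ h : StrongDual ℝ Y, (∀ z ∈ Z, h z = 0) → u h = 0) →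
        ‖T2 xss + u‖ ≥ ‖T2 xss‖ := by
  have norm_le_add : ∀ u : StrongDual ℝ (StrongDual ℝ Y), u g = 0 → ‖T‖ ≤ ‖T2 xss + u‖ :=
    fun u hu ↦ calc
      ‖T‖ = ‖T2 xss g‖ := by rw [hT2, hnorm, Real.norm_of_nonneg (norm_nonneg T)]
      _ ≤ ‖T2 xss + u‖ * ‖g‖ := norm_apply_le_norm_add_mul_of_apply_eq_zero _ hu
      _ = ‖T2 xss + u‖ := by rw [hg, mul_one]
  have le_norm : ‖T‖ ≤ ‖T2 xss‖ := by simpa using norm_le_add 0 rfl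
  have norm_le : ‖T2 xss‖ ≤ ‖T‖ := by simpa [hxss] using IsDoubleAdjoint.norm_apply_le hT2 xss
  have hT2_le := IsDoubleAdjoint.opNorm_le hT2
  have norm_le_opNorm := @le_opNorm ℝ ℝ (StrongDual ℝ (StrongDual ℝ X))
    (StrongDual ℝ (StrongDual ℝ Y)) _ _ _ _ _ _ (RingHom.id ℝ) _ T2 xss
  rw [hxss, mul_one] at norm_le_opNorm
  exact ⟨le_antisymm norm_le_opNorm (hT2_le.trans le_norm),
    fun u hu ↦ norm_le.trans (norm_le_add u (hu g hgZ))⟩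

theorem stmt_7
    {X Y : Type*} [NormedAddCommGroup X] [NormedSpace ℝ X] [CompleteSpace X]
    [NormedAddCommGroup Y] [NormedSpace ℝ Y] [CompleteSpace Y]
    (Z : Subspace ℝ Y) (hZ : IsClosed (Z : Set Y))
    (T : X →L[ℝ] Y)
    (T2 : StrongDual ℝ (StrongDual ℝ X) →L[ℝ] StrongDual ℝ (StrongDual ℝ Y))
    (hT2 : ∀ (ξ : StrongDual ℝ (StrongDual ℝ X)) (g : StrongDual ℝ Y), T2 ξ g = ξ (g.comp T))
    (g : StrongDual ℝ Y) (hg : ‖g‖ = 1) (hgZ : ∀ z ∈ Z, g z = 0)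
    (xss : StrongDual ℝ (StrongDual ℝ X)) (hxss : ‖xss‖ = 1)
    (hnorm : xss (g.comp T) = ‖T‖) :
    ‖T2 xss‖ = @Norm.norm _ (@ContinuousLinearMap.hasOpNorm ℝ ℝ (StrongDual ℝ (StrongDual ℝ X))
        (StrongDual ℝ (StrongDual ℝ Y)) _ _ _ _ _ _ (RingHom.id ℝ)) T2 ∧
      ∀ u : StrongDual ℝ (StrongDual ℝ Y),
        (∀ h : StrongDual ℝ Y, (∀ z ∈ Z, h z = 0) → u h = 0) →
        ‖T2 xss + u‖ ≥ ‖T2 xss‖ :=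
  stmt_7_general Z T T2 hT2 g hg hgZ xss hxss hnorm
end

section
/- Let X be a reflexive real Banach space, Y a Banach space, Z a closed subspace of Y, and T : X → Y bounded linear. Suppose x₀ ∈ S_X, ‖Tx₀‖ = ‖T‖, and y* ∈ Y* with ‖y*‖ = 1 satisfies y*(z) = 0 for all z ∈ Z and y*(Tx₀) = ‖Tx₀‖. Then d(T, L(X,Z)) = sup_{x ∈ S_X} d(Tx, Z) = d(Tx₀, Z) = ‖T‖ and moreover T ⊥_B L(X,Z). -/
open NormedSpace Metric

/-
A norm-one functional `g` vanishing on `Z` bounds the distance to `Z` from below: `g y = g (y - z) ≤ ‖y - z‖`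
for `z ∈ Z`. At `y = T x₀` this lower bound is `‖T x₀‖ = ‖T‖`, which is also the trivial upper bound
`infDist y Z ≤ ‖y‖`. Every `S` with range in `Z` satisfies `infDist (T x₀) Z ≤ ‖(T - S) x₀‖ ≤ ‖T - S‖`,
so `‖T - S‖ ≥ ‖T‖` for all such `S`, which gives the distance formulas and Birkhoff orthogonality at once.
-/

theorem Metric.infDist_le_norm_of_zero_mem {E : Type*} [SeminormedAddCommGroup E] {s : Set E}
    (h0 : (0 : E) ∈ s) (y : E) : infDist y s ≤ ‖y‖ := by
  simpa using infDist_le_dist_of_mem (x := y) h0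

theorem ContinuousLinearMap.infDist_apply_le_opNorm_sub {𝕜 X Y : Type*} [NontriviallyNormedField 𝕜]
    [SeminormedAddCommGroup X] [NormedSpace 𝕜 X] [SeminormedAddCommGroup Y] [NormedSpace 𝕜 Y]
    (T S : X →L[𝕜] Y) {s : Set Y} (hS : ∀ x, S x ∈ s) {x : X} (hx : ‖x‖ ≤ 1) :
    infDist (T x) s ≤ ‖T - S‖ :=
  calc infDist (T x) s ≤ dist (T x) (S x) := infDist_le_dist_of_mem (hS x)
    _ = ‖(T - S) x‖ := by rw [dist_eq_norm, sub_apply]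
    _ ≤ ‖T - S‖ * 1 := (T - S).le_opNorm_of_le hx
    _ = ‖T - S‖ := mul_one _

theorem StrongDual.apply_le_infDist_of_forall_mem_eq_zero {Y : Type*} [SeminormedAddCommGroup Y]
    [NormedSpace ℝ Y] {g : StrongDual ℝ Y} (hg : ‖g‖ ≤ 1) {Z : Submodule ℝ Y}
    (hgZ : ∀ z ∈ Z, g z = 0) (y : Y) : g y ≤ infDist y Z := by
  refine (le_infDist ⟨0, Z.zero_mem⟩).2 fun z hz => ?_
  calc g y = g (y - z) := by rw [map_sub, hgZ z hz, sub_zero]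
    _ ≤ ‖g (y - z)‖ := le_abs_self _
    _ ≤ 1 * ‖y - z‖ := g.le_of_opNorm_le hg _
    _ = dist y z := by rw [one_mul, dist_eq_norm]

theorem stmt_10_general
    {X Y : Type*} [NormedAddCommGroup X] [NormedSpace ℝ X]
    [NormedAddCommGroup Y] [NormedSpace ℝ Y]
    (Z : Subspace ℝ Y)
    (T : X →L[ℝ] Y) (x₀ : X) (hx₀ : ‖x₀‖ = 1) (hTx₀ : ‖T x₀‖ = ‖T‖)
    (g : StrongDual ℝ Y) (hg : ‖g‖ = 1) (hgZ : ∀ z ∈ Z, g z = 0)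
    (hgy : g (T x₀) = ‖T x₀‖) :
    sInf {r : ℝ | ∃ S : X →L[ℝ] Y, (∀ x, S x ∈ Z) ∧ r = ‖T - S‖} = ‖T‖ ∧
    sSup {r : ℝ | ∃ x : X, ‖x‖ = 1 ∧ r = Metric.infDist (T x) (Z : Set Y)} = ‖T‖ ∧
    Metric.infDist (T x₀) (Z : Set Y) = ‖T‖ ∧
    (∀ S : X →L[ℝ] Y, (∀ x, S x ∈ Z) → ∀ lam : ℝ, ‖T + lam • S‖ ≥ ‖T‖) := by
  have hd : infDist (T x₀) Z = ‖T‖ := le_antisymm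
    (hTx₀ ▸ infDist_le_norm_of_zero_mem Z.zero_mem _)
    (hTx₀ ▸ hgy ▸ StrongDual.apply_le_infDist_of_forall_mem_eq_zero hg.le hgZ _)
  have hdist_le : ∀ S : X →L[ℝ] Y, (∀ x, S x ∈ Z) → ‖T‖ ≤ ‖T - S‖ := fun S hS =>
    hd ▸ T.infDist_apply_le_opNorm_sub S hS hx₀.le
  refine ⟨?_, ?_, hd, fun S hS lam => ?_⟩
  · refine IsLeast.csInf_eq ⟨⟨0, fun _ => Z.zero_mem, by rw [sub_zero]⟩, ?_⟩
    rintro _ ⟨S, hS, rfl⟩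
    exact hdist_le S hS
  · refine IsGreatest.csSup_eq ⟨⟨x₀, hx₀, hd.symm⟩, ?_⟩
    rintro _ ⟨x, hx, rfl⟩
    simpa using T.infDist_apply_le_opNorm_sub 0 (fun _ => Z.zero_mem) hx.le
  · simpa [sub_eq_add_neg] using hdist_le (-lam • S) fun x => Z.smul_mem _ (hS x)

theorem stmt_10
    {X Y : Type*} [NormedAddCommGroup X] [NormedSpace ℝ X] [CompleteSpace X]
    [NormedAddCommGroup Y] [NormedSpace ℝ Y] [CompleteSpace Y]
    (hrefl : Function.Surjective (inclusionInDoubleDual ℝ X))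
    (Z : Subspace ℝ Y) (hZ : IsClosed (Z : Set Y))
    (T : X →L[ℝ] Y) (x₀ : X) (hx₀ : ‖x₀‖ = 1) (hTx₀ : ‖T x₀‖ = ‖T‖)
    (g : StrongDual ℝ Y) (hg : ‖g‖ = 1) (hgZ : ∀ z ∈ Z, g z = 0)
    (hgy : g (T x₀) = ‖T x₀‖) :
    sInf {r : ℝ | ∃ S : X →L[ℝ] Y, (∀ x, S x ∈ Z) ∧ r = ‖T - S‖} = ‖T‖ ∧
    sSup {r : ℝ | ∃ x : X, ‖x‖ = 1 ∧ r = Metric.infDist (T x) (Z : Set Y)} = ‖T‖ ∧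
    Metric.infDist (T x₀) (Z : Set Y) = ‖T‖ ∧
    (∀ S : X →L[ℝ] Y, (∀ x, S x ∈ Z) → ∀ lam : ℝ, ‖T + lam • S‖ ≥ ‖T‖) :=
  stmt_10_general Z T x₀ hx₀ hTx₀ g hg hgZ hgy
end
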